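/- Let u ∈ C_{+,log} be (log, x^k)-convex for some k > 0. Then for all integers n, m ≥ 0, ℓ_u(n)·ℓ_u(m) ≤ ℓ_u(0) · 2^{k(n+m)} · ℓ_u(n+m). -/

import Mathlib

open Real Set Filter

noncomputable def leg (u : ℝ → ℝ) (t : ℝ) : ℝ := ⨅ r : Ioi (0:ℝ), u r / (r : ℝ) ^ t

def CplusLog (u : ℝ → ℝ) : Prop :=
  ContinuousOn u (Ici 0) ∧ (∀ r ∈ Ici (0:ℝ), 0 < u r) ∧
  Tendsto (fun r => Real.log (u r) / Real.log r) atTop atTop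

lemma leg_bdd (u : ℝ → ℝ) (hu : ∀ r ∈ Ici (0:ℝ), 0 < u r) (t : ℝ) :
    BddBelow (Set.range fun r : Ioi (0:ℝ) => u r / (r : ℝ) ^ t) := by
  refine ⟨0, ?_⟩
  rintro y ⟨⟨r, hr⟩, rfl⟩
  exact le_of_lt (div_pos (hu r (mem_Ici.2 (le_of_lt hr))) (Real.rpow_pos_of_pos hr t))

lemma leg_nonneg (u : ℝ → ℝ) (hu : ∀ r ∈ Ici (0:ℝ), 0 < u r) (t : ℝ) :
    0 ≤ leg u t :=
  le_ciInf fun r => le_of_lt (div_pos (hu r (mem_Ici.2 (le_of_lt r.2))) (Real.rpow_pos_of_pos r.2 t))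

lemma leg_le (u : ℝ → ℝ) (hu : ∀ r ∈ Ici (0:ℝ), 0 < u r) (t : ℝ) {r : ℝ} (hr : 0 < r) :
    leg u t ≤ u r / r ^ t := ciInf_le (leg_bdd u hu t) ⟨r, hr⟩

set_option maxHeartbeats 800000 in
theorem stmt14 (u : ℝ → ℝ) (hu : CplusLog u) (k : ℝ) (hk : 0 < k)
    (hxk : ConvexOn ℝ (Ici 0) (fun x => Real.log (u (x ^ k)))) :
    ∀ n m : ℕ, leg u n * leg u m ≤ leg u 0 * 2 ^ (k * (n + m)) * leg u (n + m) := by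
  obtain ⟨-, hpos, -⟩ := hu
  intro n m
  set N : ℝ := (n : ℝ) + (m : ℝ) with hNdef
  have hN0 : (0:ℝ) ≤ N := by positivity
  set C : ℝ := (2:ℝ) ^ (k * N) with hCdef
  have hCpos : (0:ℝ) < C := Real.rpow_pos_of_pos (by norm_num) _
  have hl0 : (0:ℝ) ≤ leg u 0 := leg_nonneg u hpos 0
  have hlN : (0:ℝ) ≤ leg u N := leg_nonneg u hpos N
  have key : ∀ ε : ℝ, 0 < ε → leg u n * leg u m ≤ (leg u 0 + ε) * C * leg u N := by
    intro ε hε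
    have hlt : leg u 0 < leg u 0 + ε := lt_add_of_pos_right _ hε
    obtain ⟨⟨r₀, hr₀⟩, h₀⟩ := exists_lt_of_ciInf_lt hlt
    rw [Real.rpow_zero, div_one] at h₀
    have h₀' : u r₀ < leg u 0 + ε := h₀
    have hur₀ : 0 < u r₀ := hpos r₀ (mem_Ici.2 (le_of_lt hr₀))
    have hpos' : (0:ℝ) < (leg u 0 + ε) * C := by positivity
    -- pointwise bound
    have main : ∀ r : Ioi (0:ℝ),
        leg u n * leg u m / ((leg u 0 + ε) * C) ≤ u r / (r : ℝ) ^ N := by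
      rintro ⟨r, hr⟩
      simp only
      rw [div_le_iff₀ hpos']
      have hur : 0 < u r := hpos r (mem_Ici.2 (le_of_lt hr))
      set x : ℝ := r ^ (1/k) with hxdef
      set x₀ : ℝ := r₀ ^ (1/k) with hx₀def
      have hx : 0 < x := Real.rpow_pos_of_pos hr _
      have hx₀ : 0 < x₀ := Real.rpow_pos_of_pos hr₀ _
      have hxk' : x ^ k = r := by
        rw [hxdef, ← Real.rpow_mul (le_of_lt hr), one_div_mul_cancel hk.ne', Real.rpow_one]
      have hx₀k : x₀ ^ k = r₀ := by
        rw [hx₀def, ← Real.rpow_mul (le_of_lt hr₀), one_div_mul_cancel hk.ne', Real.rpow_one]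
      set ρ : ℝ := ((x + x₀)/2) ^ k with hρdef
      have hmidpos : 0 < (x + x₀)/2 := by positivity
      have hρ : 0 < ρ := Real.rpow_pos_of_pos hmidpos _
      have huρ : 0 < u ρ := hpos ρ (mem_Ici.2 (le_of_lt hρ))
      -- convexity
      have hconv := hxk.2 (mem_Ici.2 hx.le) (mem_Ici.2 hx₀.le)
        (by norm_num : (0:ℝ) ≤ 1/2) (by norm_num : (0:ℝ) ≤ 1/2) (by norm_num)
      simp only [smul_eq_mul] at hconv
      have hmid : (1/2 : ℝ) * x + (1/2 : ℝ) * x₀ = (x + x₀)/2 := by ring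
      rw [hmid, hxk', hx₀k] at hconv
      -- u ρ ^ 2 ≤ u r * u r₀
      have hsq : u ρ ^ (2:ℕ) ≤ u r * u r₀ := by
        have hlog : Real.log (u ρ ^ (2:ℕ)) ≤ Real.log (u r * u r₀) := by
          rw [Real.log_pow, Real.log_mul hur.ne' hur₀.ne']
          push_cast
          linarith
        exact (Real.log_le_log_iff (by positivity) (by positivity)).1 hlog
      -- leg bounds
      have h1 : leg u n ≤ u ρ / ρ ^ (n:ℝ) := leg_le u hpos _ hρ
      have h2 : leg u m ≤ u ρ / ρ ^ (m:ℝ) := leg_le u hpos _ hρ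
      have hprod : leg u n * leg u m ≤ u ρ ^ (2:ℕ) / ρ ^ N := by
        have := mul_le_mul h1 h2 (leg_nonneg u hpos _)
          (le_of_lt (div_pos huρ (Real.rpow_pos_of_pos hρ _)))
        calc leg u n * leg u m ≤ (u ρ / ρ ^ (n:ℝ)) * (u ρ / ρ ^ (m:ℝ)) := this
          _ = u ρ ^ (2:ℕ) / ρ ^ N := by
              rw [hNdef, Real.rpow_add hρ]
              ring
      -- ρ ≥ r / 2^k
      have hρge : r / (2:ℝ) ^ k ≤ ρ := by
        have h1' : x / 2 ≤ (x + x₀)/2 := by linarith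
        have h2' : (x/2) ^ k ≤ ρ := Real.rpow_le_rpow (by positivity) h1' hk.le
        have h3' : (x/2) ^ k = r / (2:ℝ) ^ k := by
          rw [Real.div_rpow hx.le (by norm_num : (0:ℝ) ≤ 2), hxk']
        linarith [h2', h3'.symm.le]
      -- ρ ^ N ≥ r ^ N / C
      have hρN : r ^ N / C ≤ ρ ^ N := by
        have : (r / (2:ℝ)^k) ^ N ≤ ρ ^ N := Real.rpow_le_rpow (le_of_lt (div_pos hr (Real.rpow_pos_of_pos two_pos k))) hρge hN0
        have heq : (r / (2:ℝ)^k) ^ N = r ^ N / C := by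
          rw [Real.div_rpow hr.le (Real.rpow_pos_of_pos two_pos k).le, hCdef, Real.rpow_mul (by norm_num : (0:ℝ) ≤ 2)]
        linarith [heq ▸ this]
      have hrN : 0 < r ^ N := Real.rpow_pos_of_pos hr N
      have hden : 0 < r ^ N / C := by positivity
      -- combine
      calc leg u n * leg u m ≤ u ρ ^ (2:ℕ) / ρ ^ N := hprod
        _ ≤ (u r * u r₀) / (r ^ N / C) := by
            apply div_le_div₀ (by positivity) hsq hden hρN
        _ = u r₀ * (u r / r ^ N) * C := by rw [div_div_eq_mul_div]; ring
        _ ≤ (leg u 0 + ε) * (u r / r ^ N) * C := by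
            have hmul := mul_le_mul_of_nonneg_right h₀'.le
              (by positivity : (0:ℝ) ≤ u r / r ^ N * C)
            nlinarith [hmul]
        _ = u r / r ^ N * ((leg u 0 + ε) * C) := by ring
    have hinf : leg u n * leg u m / ((leg u 0 + ε) * C) ≤ leg u N := le_ciInf main
    rw [div_le_iff₀ hpos'] at hinf
    calc leg u n * leg u m ≤ leg u N * ((leg u 0 + ε) * C) := hinf
      _ = (leg u 0 + ε) * C * leg u N := by ring
  -- let ε → 0
  have hD : (0:ℝ) ≤ C * leg u N := by positivity
  rcases eq_or_lt_of_le hD with hD0 | hDpos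
  · have := key 1 one_pos
    calc leg u n * leg u m ≤ (leg u 0 + 1) * C * leg u N := this
      _ = leg u 0 * C * leg u N + C * leg u N := by ring
      _ = leg u 0 * C * leg u N := by rw [← hD0]; ring
  · apply le_of_forall_pos_le_add
    intro δ hδ
    have hε : 0 < δ / (C * leg u N) := div_pos hδ hDpos
    have := key _ hε
    calc leg u n * leg u m ≤ (leg u 0 + δ / (C * leg u N)) * C * leg u N := this
      _ = leg u 0 * C * leg u N + δ / (C * leg u N) * (C * leg u N) := by ring
      _ = leg u 0 * 2 ^ (k * (↑n + ↑m)) * leg u (↑n + ↑m) + δ := by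
          rw [div_mul_cancel₀ _ (ne_of_gt hDpos)]
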